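/- Correctness of greedy composition: for all p : P_B C, q : P_A B, eat∞ (p ⊗' q) = eat∞ p ∘ eat∞ q. -/

import Mathlib

universe u

/-- The initial algebra `T_A B = μX. B + X^A`: wellfounded trees branching over `A`
with leaves labelled in `B`. -/
inductive T (A : Type u) (B : Type u) : Type u
  | Ret : B → T A B
  | Rd : (A → T A B) → T A B

namespace StreamProc

/-- `eat (Ret b) α = (b, α)`, `eat (Rd φ) (a ∷ α) = eat (φ a) α`. -/
def eat {A B : Type u} : T A B → Stream' A → B × Stream' A
  | .Ret b, α => (b, α)
  | .Rd φ, α => eat (φ α.head) α.tail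

/-- `β` and `α` agree on their first `n` entries. -/
def Agree {A : Type u} (n : ℕ) (α β : Stream' A) : Prop :=
  ∀ i < n, α.get i = β.get i

/-- continuity of a discrete-valued function on streams (product topology of
the discrete topology, expressed concretely via prefixes). -/
def ContD {A B : Type u} (f : Stream' A → B) : Prop :=
  ∀ α, ∃ n, ∀ β, Agree n α β → f β = f α

/-- continuity of a stream-valued function on streams. -/
def ContS {A B : Type u} (f : Stream' A → Stream' B) : Prop :=
  ∀ α n, ∃ m, ∀ β, Agree m α β → Agree n (f α) (f β)

/-- structural recursion (fold) on `T A B`. -/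
def tfold {A B C : Type u} (r : B → C) (g : (A → C) → C) : T A B → C
  | .Ret b => r b
  | .Rd φ => g fun a => tfold r g (φ a)

/-- bind of the free (tree) monad `T_A`: grafting at leaves. -/
def tbind {A B C : Type u} : T A B → (B → T A C) → T A C
  | .Ret b, f => f b
  | .Rd φ, f => .Rd fun a => tbind (φ a) f

/-- bind of the state monad `M_A B = A^ω → B × A^ω`. -/
def mbind {A B C : Type u} (m : Stream' A → B × Stream' A)
    (f : B → Stream' A → C × Stream' A) : Stream' A → C × Stream' A :=
  fun α => f (m α).1 (m α).2

/-- the type of leaf positions of a tree. -/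
def LeafPos {A B : Type u} : T A B → Type u
  | .Ret _ => PUnit
  | .Rd φ => Σ a, LeafPos (φ a)

/-- the polynomial functor whose extension is `X ↦ T A (B × X)`. -/
def PF (A B : Type u) : PFunctor.{u} := ⟨T A B, LeafPos⟩

/-- `P_A B = νX. T_A (B × X)`, realised as an M-type. -/
def P (A B : Type u) : Type u := (PF A B).M

/-- repack a shape and leaf-labelling as a tree with decorated leaves. -/
def decorate {A B X : Type u} : (t : T A B) → (LeafPos t → X) → T A (B × X)
  | .Ret b, f => .Ret (b, f PUnit.unit)
  | .Rd φ, f => .Rd fun a => decorate (φ a) fun l => f ⟨a, l⟩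

/-- split a leaf-decorated tree into a shape and a leaf-labelling. -/
def splitT {A B X : Type u} : T A (B × X) → Σ t : T A B, LeafPos t → X
  | .Ret bx => ⟨.Ret bx.1, fun _ => bx.2⟩
  | .Rd φ => ⟨.Rd fun a => (splitT (φ a)).1, fun l => (splitT (φ l.1)).2 l.2⟩

/-- the structure map `out : P_A B → T_A (B × P_A B)` of the final coalgebra. -/
def Pout {A B : Type u} (p : P A B) : T A (B × P A B) :=
  decorate (PFunctor.M.dest p).1 (PFunctor.M.dest p).2

/-- corecursion (unfold) into the final coalgebra `P_A B`. -/
def Punfold {A B X : Type u} (c : X → T A (B × X)) : X → P A B :=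
  PFunctor.M.corec fun x => splitT (c x)

/-- `eat∞ : P_A B → A^ω → B^ω`: if `eat (out p) α = ((b, p'), α')` then
`eat∞ p α = b ∷ eat∞ p' α'`. -/
def eatInf {A B : Type u} (p : P A B) (α : Stream' A) : Stream' B :=
  Stream'.corec (fun s : P A B × Stream' A => (eat (Pout s.1) s.2).1.1)
    (fun s => ((eat (Pout s.1) s.2).1.2, (eat (Pout s.1) s.2).2)) (p, α)

/-- the `fast-forward` map `ρ`. -/
def rho {A B C : Type u} : T A B → (Stream' A → C) → T A (B × (Stream' A → C))
  | .Ret b, f => .Ret (b, f)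
  | .Rd φ, f => .Rd fun a => rho (φ a) fun α => f (Stream'.cons a α)

/-- `rep∞ = unfold (ρ ∘ τ)` where `τ f = (rep (head ∘ f), tail ∘ f)`. -/
def repInf {A B : Type u} (rep : (Stream' A → B) → T A B) :
    (Stream' A → Stream' B) → P A B :=
  Punfold fun f => rho (rep fun α => (f α).head) fun α => (f α).tail

/-- the carrier of the composition coalgebras. -/
def S' (A B C : Type u) : Type u := T B (C × P B C) × T A (B × P A B)

/-- the `lazy' composition coalgebra `χ`, as a nested structural recursion
(outer fold on the postponent, inner fold on the preponent). -/
def chi {A B C : Type u} : T B (C × P B C) → T A (B × P A B) → T A (C × S' A B C) :=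
  tfold
    (fun cp u => .Ret (cp.1, (Pout cp.2, u)))
    (fun f => tfold (fun bq => f bq.1 (Pout bq.2)) .Rd)

/-- the `greedy' composition coalgebra `χ'`. -/
def chi' {A B C : Type u} : T B (C × P B C) → T A (B × P A B) → T A (C × S' A B C) :=
  tfold
    (fun cp => tfold (fun bq => .Ret (cp.1, (Pout cp.2, .Ret bq))) .Rd)
    (fun f => tfold (fun bq => f bq.1 (Pout bq.2)) .Rd)

/-- lazy composition on representatives (tree level). -/
def otimesT {A B C : Type u} (t : T B (C × P B C)) (u : T A (B × P A B)) : P A C :=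
  Punfold (fun s : S' A B C => chi s.1 s.2) (t, u)

/-- lazy composition `⊗ : P_B C × P_A B → P_A C`. -/
def otimes {A B C : Type u} (p : P B C) (q : P A B) : P A C :=
  otimesT (Pout p) (Pout q)

/-- greedy composition on representatives (tree level). -/
def otimesT' {A B C : Type u} (t : T B (C × P B C)) (u : T A (B × P A B)) : P A C :=
  Punfold (fun s : S' A B C => chi' s.1 s.2) (t, u)

/-- greedy composition `⊗' : P_B C × P_A B → P_A C`. -/
def otimes' {A B C : Type u} (p : P B C) (q : P A B) : P A C :=
  otimesT' (Pout p) (Pout q)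

end StreamProc

/-!
Running a tree `t : T B (C × P B C)` on the output of a tree `u : T A (B × P A B)` produces
the first output of `χ' t u` followed by the composite of the two residual trees that `χ'`
leaves behind: this is a nested induction on `t` and `u` following the three equations of
`χ'`. Hence `eat∞ (t ⊗' u)` and `eat∞ t ∘ eat∞ u` are related by a stream bisimulation.
-/

namespace StreamProc

def tmap {A B C : Type u} (f : B → C) : T A B → T A C
  | .Ret b => .Ret (f b)
  | .Rd φ => .Rd fun a => tmap f (φ a)

theorem eat_tmap {A B C : Type u} (f : B → C) :
    ∀ (t : T A B) (α : Stream' A), eat (tmap f t) α = (f (eat t α).1, (eat t α).2)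
  | .Ret _, _ => rfl
  | .Rd φ, α => eat_tmap f (φ α.head) α.tail

theorem decorate_splitT {A B X Y : Type u} (g : X → Y) :
    ∀ s : T A (B × X),
      decorate (splitT s).1 (fun l => g ((splitT s).2 l)) = tmap (fun bx => (bx.1, g bx.2)) s
  | .Ret _ => rfl
  | .Rd φ => congrArg T.Rd (funext fun a => decorate_splitT g (φ a))

theorem Pout_Punfold {A B X : Type u} (c : X → T A (B × X)) (x : X) :
    Pout (Punfold c x) = tmap (fun bx => (bx.1, Punfold c bx.2)) (c x) := by
  have hdest : PFunctor.M.dest (Punfold c x) = (PF A B).map (Punfold c) (splitT (c x)) :=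
    PFunctor.M.dest_corec _ _
  rw [Pout, hdest]
  exact decorate_splitT (Punfold c) (c x)

def eatInfT {A B : Type u} (t : T A (B × P A B)) (α : Stream' A) : Stream' B :=
  Stream'.cons (eat t α).1.1 (eatInf (eat t α).1.2 (eat t α).2)

theorem eatInf_eq_eatInfT {A B : Type u} (p : P A B) (α : Stream' A) :
    eatInf p α = eatInfT (Pout p) α :=
  Stream'.corec_eq _ _ _

theorem eatInfT_Rd {A B : Type u} (φ : A → T A (B × P A B)) (α : Stream' A) :
    eatInfT (.Rd φ) α = eatInfT (φ α.head) α.tail := rfl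

theorem eatInfT_Ret {A B : Type u} (bq : B × P A B) (α : Stream' A) :
    eatInfT (.Ret bq) α = Stream'.cons bq.1 (eatInf bq.2 α) := rfl

theorem chi'_Rd {A B C : Type u} (t : T B (C × P B C)) (ψ : A → T A (B × P A B)) :
    chi' t (.Rd ψ) = .Rd fun a => chi' t (ψ a) := by
  cases t <;> rfl

theorem chi'_Rd_Ret {A B C : Type u} (φ : B → T B (C × P B C)) (bq : B × P A B) :
    chi' (.Rd φ) (.Ret bq) = chi' (φ bq.1) (Pout bq.2) := rfl

theorem chi'_Ret_Ret {A B C : Type u} (cp : C × P B C) (bq : B × P A B) :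
    chi' (.Ret cp) (.Ret bq) = .Ret (cp.1, (Pout cp.2, .Ret bq)) := rfl

theorem eatInfT_eatInfT {A B C : Type u} (t : T B (C × P B C)) (u : T A (B × P A B))
    (α : Stream' A) :
    eatInfT t (eatInfT u α) = Stream'.cons (eat (chi' t u) α).1.1
      (eatInfT (eat (chi' t u) α).1.2.1
        (eatInfT (eat (chi' t u) α).1.2.2 (eat (chi' t u) α).2)) := by
  induction t generalizing u α with
  | Ret cp =>
    induction u generalizing α with
    | Ret bq =>
      rw [chi'_Ret_Ret, eatInfT_Ret, eatInfT_Ret, eatInf_eq_eatInfT]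
      rfl
    | Rd ψ ih =>
      rw [chi'_Rd, eatInfT_Rd ψ α, ih α.head α.tail]
      rfl
  | Rd φ ih =>
    induction u generalizing α with
    | Ret bq =>
      rw [chi'_Rd_Ret, eatInfT_Ret, eatInfT_Rd, Stream'.head_cons, Stream'.tail_cons,
        eatInf_eq_eatInfT, ih bq.1 (Pout bq.2) α]
    | Rd ψ ih' =>
      rw [chi'_Rd, eatInfT_Rd ψ α, ih' α.head α.tail]
      rfl

theorem eatInf_otimesT' {A B C : Type u} (t : T B (C × P B C)) (u : T A (B × P A B))
    (α : Stream' A) :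
    eatInf (otimesT' t u) α = Stream'.cons (eat (chi' t u) α).1.1
      (eatInf (otimesT' (eat (chi' t u) α).1.2.1 (eat (chi' t u) α).1.2.2)
        (eat (chi' t u) α).2) := by
  have hout : Pout (otimesT' t u)
      = tmap (fun cs : C × S' A B C => (cs.1, otimesT' cs.2.1 cs.2.2)) (chi' t u) :=
    Pout_Punfold (fun s : S' A B C => chi' s.1 s.2) (t, u)
  rw [eatInf_eq_eatInfT, eatInfT, hout, eat_tmap]

theorem eatInf_otimesT'_eq_eatInfT_eatInfT {A B C : Type u} (t : T B (C × P B C))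
    (u : T A (B × P A B)) (α : Stream' A) :
    eatInf (otimesT' t u) α = eatInfT t (eatInfT u α) := by
  refine Stream'.eq_of_bisim
    (fun s₁ s₂ => ∃ (t : T B (C × P B C)) (u : T A (B × P A B)) (β : Stream' A),
      s₁ = eatInf (otimesT' t u) β ∧ s₂ = eatInfT t (eatInfT u β))
    ?_ ⟨t, u, α, rfl, rfl⟩
  rintro _ _ ⟨t, u, β, rfl, rfl⟩
  rw [eatInf_otimesT', eatInfT_eatInfT]
  exact ⟨rfl, _, _, _, rfl, rfl⟩

/-- Correctness of greedy composition: `eat∞ (p ⊗' q) = eat∞ p ∘ eat∞ q`. -/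
theorem stmt18 {A B C : Type u} (p : P B C) (q : P A B) :
    eatInf (otimes' p q) = eatInf p ∘ eatInf q := by
  funext α
  rw [Function.comp_apply, eatInf_eq_eatInfT p, eatInf_eq_eatInfT q]
  exact eatInf_otimesT'_eq_eatInfT_eatInfT (Pout p) (Pout q) α

end StreamProc
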